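/- arXiv:1101.3029 — 2 statements merged into one kernel-verified Lean document; each statement's English description precedes it below -/
import Mathlib

section
/- Let p ≡ 1 (mod 6) be a prime, let χ be a nontrivial cubic multiplicative character of F_p, let G_0, G_1, G_2 be the associated Gauss periods, and set η = G_0. Then there exist integers u, v with 4p = u² + 27v², u ≡ 1 (mod 3), and v ≠ 0, such that G_1 = η²/v + ((4 − u − 3v)/(6v)) η + (2 − u − 9v − 4p)/(18v) and G_2 = −η²/v − ((3v − u + 4)/(6v)) η − (9v − u − 4p + 2)/(18v); consequently the Gauss sum satisfies G_1(1,χ) = η + ζ_3 (η²/v + ((4 − u − 3v)/(6v)) η + (2 − u − 9v − 4p)/(18v)) + ζ_3² (−η²/v − ((3v − u + 4)/(6v)) η − (9v − u − 4p + 2)/(18v)). -/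
/-!
The Gauss periods are the discrete Fourier coefficients of the Gauss sums: with
`g₁ = g(χ)` and `g₂ = g(χ²)` one has `G₀ + G₁ + G₂ = -1`, `g₁ = G₀ + ωG₁ + ω²G₂` and
`g₂ = G₀ + ω²G₁ + ωG₂`, so `3G₀ = -1 + g₁ + g₂` and `3G₁ = -1 + ω²g₁ + ωg₂`.
Writing the Jacobi sum as `J(χ,χ) = a + 3vω` with `a ≡ 2 (mod 3)` (it is `≡ -1` modulo
`(ω - 1)² = -3ω`), the relations `g₁g₂ = p`, `g₁² = J g₂`, `g₂² = J̄ g₁` make `18vG₁` a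
quadratic polynomial in `G₀`, while `J J̄ = p` gives `4p = u² + 27v²` with `u = 2a - 3v`.
Finally `v ≠ 0` because `p` is not a square.
-/

open Finset

/-- `ζ_p = exp(2πi/p)`. -/
noncomputable def zetaC (p : ℕ) : ℂ := Complex.exp (2 * (Real.pi : ℂ) * Complex.I / (p : ℂ))

/-- `ζ_3 = exp(2πi/3)`. -/
noncomputable def zeta3 : ℂ := Complex.exp (2 * (Real.pi : ℂ) * Complex.I / 3)

open scoped Classical in
/-- The Gauss period `G_j = Σ_{x ∈ F_p^*, χ(x) = ζ_3^j} ζ_p^x` attached to a (cubic)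
character `χ` on the prime field `F_p = ZMod p`. -/
noncomputable def gaussPeriodP (p : ℕ) [NeZero p] (χ : ZMod p → ℂ) (j : ℕ) : ℂ :=
  ∑ x ∈ Finset.univ.filter (fun x : ZMod p => x ≠ 0 ∧ χ x = zeta3 ^ j), zetaC p ^ x.val

/-- The Gauss sum `G_1(1,χ) = Σ_{y ∈ F_p} χ(y) ζ_p^y` over the prime field `F_p = ZMod p`. -/
noncomputable def gaussSumP (p : ℕ) [NeZero p] (χ : ZMod p → ℂ) : ℂ :=
  ∑ y : ZMod p, χ y * zetaC p ^ y.val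

open MulChar

lemma zeta3_isPrimitiveRoot : IsPrimitiveRoot zeta3 3 := by
  simpa [zeta3] using Complex.isPrimitiveRoot_exp 3 three_ne_zero

lemma zetaC_isPrimitiveRoot (p : ℕ) [NeZero p] : IsPrimitiveRoot (zetaC p) p := by
  simpa [zetaC] using Complex.isPrimitiveRoot_exp p (NeZero.ne p)

lemma zeta3_sq_add_zeta3_add_one : zeta3 ^ 2 + zeta3 + 1 = 0 := by
  have h := zeta3_isPrimitiveRoot.geom_sum_eq_zero (by norm_num)
  simp only [sum_range_succ, sum_range_zero, pow_zero, pow_one] at h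
  linear_combination h

lemma conj_zeta3 : starRingEnd ℂ zeta3 = zeta3 ^ 2 := by
  rw [← Complex.inv_eq_conj (zeta3_isPrimitiveRoot.norm'_eq_one three_ne_zero)]
  exact inv_eq_of_mul_eq_one_right (by rw [← pow_succ', zeta3_isPrimitiveRoot.pow_eq_one])

lemma exists_eq_intCast_add_intCast_mul_of_mem_adjoin {R : Type*} [CommRing R] {ω : R}
    (hω : ω ^ 2 + ω + 1 = 0) {z : R} (hz : z ∈ Algebra.adjoin ℤ {ω}) :
    ∃ c d : ℤ, z = c + d * ω := by
  induction hz using Algebra.adjoin_induction with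
  | mem x hx => exact ⟨0, 1, by simp_all⟩
  | algebraMap r => exact ⟨r, 0, by simp⟩
  | add x y _ _ ihx ihy =>
    obtain ⟨c₁, d₁, rfl⟩ := ihx
    obtain ⟨c₂, d₂, rfl⟩ := ihy
    exact ⟨c₁ + c₂, d₁ + d₂, by push_cast; ring⟩
  | mul x y _ _ ihx ihy =>
    obtain ⟨c₁, d₁, rfl⟩ := ihx
    obtain ⟨c₂, d₂, rfl⟩ := ihy
    exact ⟨c₁ * c₂ - d₁ * d₂, c₁ * d₂ + c₂ * d₁ - d₁ * d₂, by
      push_cast; linear_combination ((d₁ : R) * d₂) * hω⟩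

namespace MulChar

variable {R R' : Type*} [CommMonoid R] [CommMonoidWithZero R'] {χ : MulChar R R'}

lemma pow_three_eq_one_of_orderOf_eq_three (hχ : orderOf χ = 3) : χ ^ 3 = 1 :=
  hχ ▸ pow_orderOf_eq_one χ

lemma ne_one_of_orderOf_eq_three (hχ : orderOf χ = 3) : χ ≠ 1 := by
  rintro rfl
  simp at hχ

lemma inv_eq_sq_of_orderOf_eq_three (hχ : orderOf χ = 3) : χ⁻¹ = χ ^ 2 :=
  inv_eq_of_mul_eq_one_right <| by rw [← pow_succ', pow_three_eq_one_of_orderOf_eq_three hχ]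

lemma orderOf_sq_of_orderOf_eq_three (hχ : orderOf χ = 3) : orderOf (χ ^ 2) = 3 := by
  rw [← inv_eq_sq_of_orderOf_eq_three hχ, orderOf_inv, hχ]

lemma sq_sq_of_orderOf_eq_three (hχ : orderOf χ = 3) : (χ ^ 2) ^ 2 = χ := by
  rw [← pow_mul, show 2 * 2 = 3 + 1 by rfl, pow_succ, pow_three_eq_one_of_orderOf_eq_three hχ,
    one_mul]

end MulChar

section CubicCharacter

variable {F : Type*} [Field F] [Fintype F] {χ : MulChar F ℂ}

lemma exists_jacobiSum_eq_of_orderOf_eq_three (hχ : orderOf χ = 3) :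
    ∃ a v : ℤ, a % 3 = 2 ∧ jacobiSum χ χ = a + 3 * v * zeta3 := by
  have h3 := pow_three_eq_one_of_orderOf_eq_three hχ
  obtain ⟨z, hz, hJ⟩ := exists_jacobiSum_eq_neg_one_add (by norm_num) h3 h3
    (hχ ▸ χ.orderOf_dvd_card_sub_one) zeta3_isPrimitiveRoot
  obtain ⟨c, d, rfl⟩ :=
    exists_eq_intCast_add_intCast_mul_of_mem_adjoin zeta3_sq_add_zeta3_add_one hz
  refine ⟨3 * d - 1, d - c, by omega, ?_⟩
  rw [hJ]
  push_cast
  linear_combination ((c : ℂ) + d * (zeta3 - 3)) * zeta3_sq_add_zeta3_add_one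

lemma conj_jacobiSum_of_orderOf_eq_three (hχ : orderOf χ = 3) :
    starRingEnd ℂ (jacobiSum χ χ) = jacobiSum (χ ^ 2) (χ ^ 2) := by
  have hconj : χ.ringHomComp (starRingEnd ℂ) = χ ^ 2 := by
    rw [← inv_eq_sq_of_orderOf_eq_three hχ, ← star_eq_inv]
    rfl
  rw [← jacobiSum_ringHomComp, hconj]

lemma jacobiSum_mul_jacobiSum_sq_of_orderOf_eq_three (hχ : orderOf χ = 3) :
    jacobiSum χ χ * jacobiSum (χ ^ 2) (χ ^ 2) = Fintype.card F := by
  have hχ₁ := ne_one_of_orderOf_eq_three hχ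
  have hχχ : χ * χ ≠ 1 := by
    rw [← sq]; exact ne_one_of_orderOf_eq_three (orderOf_sq_of_orderOf_eq_three hχ)
  rw [← inv_eq_sq_of_orderOf_eq_three hχ]
  refine jacobiSum_mul_jacobiSum_inv ?_ hχ₁ hχ₁ hχχ
  rw [ringChar.eq_zero]
  exact (CharP.char_is_prime F (ringChar F)).ne_zero.symm

lemma jacobiSum_sq_eq_of_jacobiSum_eq (hχ : orderOf χ = 3) {a v : ℤ}
    (hJ : jacobiSum χ χ = a + 3 * v * zeta3) :
    jacobiSum (χ ^ 2) (χ ^ 2) = a + 3 * v * zeta3 ^ 2 := by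
  rw [← conj_jacobiSum_of_orderOf_eq_three hχ, hJ]
  simp [conj_zeta3, map_ofNat]

lemma sq_sub_mul_add_sq_eq_card_of_jacobiSum_eq (hχ : orderOf χ = 3) {a v : ℤ}
    (hJ : jacobiSum χ χ = a + 3 * v * zeta3) :
    a ^ 2 - 3 * a * v + 9 * v ^ 2 = Fintype.card F := by
  have h := jacobiSum_mul_jacobiSum_sq_of_orderOf_eq_three hχ
  rw [hJ, jacobiSum_sq_eq_of_jacobiSum_eq hχ hJ] at h
  have h3 : zeta3 ^ 3 = 1 := zeta3_isPrimitiveRoot.pow_eq_one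
  have hC : ((a ^ 2 - 3 * a * v + 9 * v ^ 2 : ℤ) : ℂ) = (Fintype.card F : ℤ) := by
    push_cast
    linear_combination h - 3 * a * v * zeta3_sq_add_zeta3_add_one - 9 * v ^ 2 * h3
  exact_mod_cast hC

variable {ψ : AddChar F ℂ}

lemma gaussSum_mul_gaussSum_sq_of_orderOf_eq_three (hχ : orderOf χ = 3) (hψ : ψ.IsPrimitive) :
    gaussSum χ ψ * gaussSum (χ ^ 2) ψ = Fintype.card F := by
  have h := gaussSum_mul_gaussSum_pow_orderOf_sub_one (ne_one_of_orderOf_eq_three hχ) hψ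
  rwa [hχ, val_neg_one_eq_one_of_odd_order (by decide) (pow_three_eq_one_of_orderOf_eq_three hχ),
    one_mul] at h

lemma gaussSum_sq_of_orderOf_eq_three (hχ : orderOf χ = 3) (ψ : AddChar F ℂ) :
    gaussSum χ ψ ^ 2 = jacobiSum χ χ * gaussSum (χ ^ 2) ψ := by
  have h := jacobiSum_mul_nontrivial (φ := χ) (by
    rw [← sq]; exact ne_one_of_orderOf_eq_three (orderOf_sq_of_orderOf_eq_three hχ)) ψ
  rw [← sq] at h
  linear_combination -h

lemma gaussSum_sq_sq_of_orderOf_eq_three (hχ : orderOf χ = 3) (ψ : AddChar F ℂ) :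
    gaussSum (χ ^ 2) ψ ^ 2 = jacobiSum (χ ^ 2) (χ ^ 2) * gaussSum χ ψ := by
  simpa only [sq_sq_of_orderOf_eq_three hχ] using
    gaussSum_sq_of_orderOf_eq_three (orderOf_sq_of_orderOf_eq_three hχ) ψ

end CubicCharacter

section GaussPeriod

noncomputable def zetaCAddChar (p : ℕ) [NeZero p] : AddChar (ZMod p) ℂ :=
  AddChar.zmodChar p (zetaC_isPrimitiveRoot p).pow_eq_one

variable {p : ℕ} [NeZero p]

lemma zetaCAddChar_apply (x : ZMod p) : zetaCAddChar p x = zetaC p ^ x.val := rfl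

lemma zetaCAddChar_isPrimitive : (zetaCAddChar p).IsPrimitive :=
  AddChar.zmodChar_primitive_of_primitive_root p (zetaC_isPrimitiveRoot p)

lemma gaussSumP_eq_gaussSum (χ : MulChar (ZMod p) ℂ) :
    gaussSumP p (fun y => χ y) = gaussSum χ (zetaCAddChar p) := rfl

variable [Fact p.Prime] {χ : MulChar (ZMod p) ℂ}

lemma sum_ne_zero_zetaC_pow : ∑ x ∈ univ.filter (· ≠ (0 : ZMod p)), zetaC p ^ x.val = -1 := by
  have hsum : ∑ x, zetaCAddChar p x = 0 := AddChar.sum_eq_zero_of_ne_one <| by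
    simpa using zetaCAddChar_isPrimitive (p := p) one_ne_zero
  rw [filter_ne', eq_neg_iff_add_eq_zero, ← hsum, ← add_sum_erase _ _ (mem_univ 0)]
  simp [zetaCAddChar_apply]

lemma sum_ne_zero_mul_zetaC_pow_eq_sum_gaussPeriodP (hχ : χ ^ 3 = 1) (w : ℂ → ℂ) :
    ∑ x ∈ univ.filter (· ≠ 0), w (χ x) * zetaC p ^ x.val =
      ∑ j ∈ range 3, w (zeta3 ^ j) * gaussPeriodP p (fun x => χ x) j := by
  classical
  have hmaps : ∀ x ∈ univ.filter (· ≠ (0 : ZMod p)), χ x ∈ (range 3).image (zeta3 ^ ·) := by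
    intro x hx
    obtain ⟨k, hk, hχx⟩ := χ.exists_apply_eq_pow hχ zeta3_isPrimitiveRoot (mem_filter.1 hx).2
    exact mem_image.2 ⟨k, mem_range.2 hk, hχx.symm⟩
  rw [← sum_fiberwise_of_maps_to hmaps, sum_image fun i hi j hj h =>
    zeta3_isPrimitiveRoot.pow_inj (mem_range.1 hi) (mem_range.1 hj) h]
  refine sum_congr rfl fun j _ => ?_
  rw [gaussPeriodP, mul_sum, filter_filter]
  refine sum_congr (by congr) fun x hx => ?_
  rw [(mem_filter.1 hx).2.2]

lemma sum_gaussPeriodP (hχ : χ ^ 3 = 1) :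
    ∑ j ∈ range 3, gaussPeriodP p (fun x => χ x) j = -1 := by
  have h := sum_ne_zero_mul_zetaC_pow_eq_sum_gaussPeriodP hχ fun _ => 1
  simp only [one_mul] at h
  rw [← h, sum_ne_zero_zetaC_pow]

lemma gaussSum_pow_eq_sum_gaussPeriodP (hχ : χ ^ 3 = 1) {k : ℕ} (hk : k ≠ 0) :
    gaussSum (χ ^ k) (zetaCAddChar p) =
      ∑ j ∈ range 3, (zeta3 ^ j) ^ k * gaussPeriodP p (fun x => χ x) j := by
  rw [← sum_ne_zero_mul_zetaC_pow_eq_sum_gaussPeriodP hχ (· ^ k), gaussSum, filter_ne',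
    ← add_sum_erase _ _ (mem_univ 0)]
  simp [pow_apply' χ hk, zetaCAddChar_apply]

end GaussPeriod

lemma ne_zero_of_sq_sub_mul_add_sq_eq_prime {p : ℕ} (hp : p.Prime) {a v : ℤ}
    (h : a ^ 2 - 3 * a * v + 9 * v ^ 2 = p) : v ≠ 0 := by
  rintro rfl
  have hsq : p = a.natAbs ^ 2 := by zify; rw [sq_abs]; linear_combination -h
  exact Nat.Prime.not_prime_pow le_rfl (hsq ▸ hp)

lemma gaussPeriods_eq_of_gaussSum_relations {K : Type*} [Field K] [CharZero K]
    {ω g₁ g₂ G₀ G₁ G₂ a u v N : K}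
    (hω : ω ^ 2 + ω + 1 = 0) (hsum : G₀ + G₁ + G₂ = -1) (hg₁ : g₁ = G₀ + ω * G₁ + ω ^ 2 * G₂)
    (hg₂ : g₂ = G₀ + ω ^ 2 * G₁ + ω ^ 4 * G₂) (hN : g₁ * g₂ = N)
    (hsq₁ : g₁ ^ 2 = (a + 3 * v * ω) * g₂) (hsq₂ : g₂ ^ 2 = (a + 3 * v * ω ^ 2) * g₁)
    (hu : u = 2 * a - 3 * v) (hv : v ≠ 0) :
    G₁ = G₀ ^ 2 / v + ((4 - u - 3 * v) / (6 * v)) * G₀ + (2 - u - 9 * v - 4 * N) / (18 * v) ∧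
      G₂ = -(G₀ ^ 2 / v) - ((3 * v - u + 4) / (6 * v)) * G₀ -
        (9 * v - u - 4 * N + 2) / (18 * v) := by
  have hω₃ : ω ^ 3 = 1 := by linear_combination (ω - 1) * hω
  have hG₀ : G₀ = (-1 + g₁ + g₂) / 3 := by
    linear_combination (hsum - hg₁ - hg₂ - (G₁ + G₂) * hω - G₂ * ω * hω₃) / 3
  have hG₁ : G₁ = (-1 + ω ^ 2 * g₁ + ω * g₂) / 3 := by
    linear_combination (hsum - ω ^ 2 * hg₁ - ω * hg₂ - (G₀ + G₂) * hω
      - (2 * G₁ + G₂ * (ω + ω ^ 2)) * hω₃) / 3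
  have key : 18 * v * G₁ = 18 * G₀ ^ 2 + 3 * (4 - u - 3 * v) * G₀ + (2 - u - 9 * v - 4 * N) := by
    rw [hG₀, hG₁, hu]
    linear_combination -2 * hsq₁ - 2 * hsq₂ - 4 * hN
  rw [show G₂ = -1 - G₀ - G₁ by linear_combination hsum]
  constructor <;> field_simp
  · linear_combination 6 * key
  · linear_combination -6 * key

theorem stmt13_general (p : ℕ) [NeZero p] (hp : p.Prime)
    (χ : MulChar (ZMod p) ℂ) (hord : orderOf χ = 3) :
    ∃ u v : ℤ, 4 * (p : ℤ) = u ^ 2 + 27 * v ^ 2 ∧ u % 3 = 1 ∧ v ≠ 0 ∧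
      gaussPeriodP p (fun x => χ x) 1 =
        (gaussPeriodP p (fun x => χ x) 0) ^ 2 / (v : ℂ) +
          ((4 - (u : ℂ) - 3 * (v : ℂ)) / (6 * (v : ℂ))) * gaussPeriodP p (fun x => χ x) 0 +
          (2 - (u : ℂ) - 9 * (v : ℂ) - 4 * (p : ℂ)) / (18 * (v : ℂ)) ∧
      gaussPeriodP p (fun x => χ x) 2 =
        -((gaussPeriodP p (fun x => χ x) 0) ^ 2 / (v : ℂ)) -
          ((3 * (v : ℂ) - (u : ℂ) + 4) / (6 * (v : ℂ))) * gaussPeriodP p (fun x => χ x) 0 -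
          (9 * (v : ℂ) - (u : ℂ) - 4 * (p : ℂ) + 2) / (18 * (v : ℂ)) ∧
      gaussSumP p (fun y => χ y) =
        gaussPeriodP p (fun x => χ x) 0 +
          zeta3 * ((gaussPeriodP p (fun x => χ x) 0) ^ 2 / (v : ℂ) +
            ((4 - (u : ℂ) - 3 * (v : ℂ)) / (6 * (v : ℂ))) * gaussPeriodP p (fun x => χ x) 0 +
            (2 - (u : ℂ) - 9 * (v : ℂ) - 4 * (p : ℂ)) / (18 * (v : ℂ))) +
          zeta3 ^ 2 * (-((gaussPeriodP p (fun x => χ x) 0) ^ 2 / (v : ℂ)) -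
            ((3 * (v : ℂ) - (u : ℂ) + 4) / (6 * (v : ℂ))) * gaussPeriodP p (fun x => χ x) 0 -
            (9 * (v : ℂ) - (u : ℂ) - 4 * (p : ℂ) + 2) / (18 * (v : ℂ))) := by
  have : Fact p.Prime := ⟨hp⟩
  have h3 := pow_three_eq_one_of_orderOf_eq_three hord
  obtain ⟨a, v, ha, hJ⟩ := exists_jacobiSum_eq_of_orderOf_eq_three hord
  have hnorm := sq_sub_mul_add_sq_eq_card_of_jacobiSum_eq hord hJ
  rw [ZMod.card] at hnorm
  have hv : (v : ℂ) ≠ 0 := Int.cast_ne_zero.2 (ne_zero_of_sq_sub_mul_add_sq_eq_prime hp hnorm)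
  have hsum := sum_gaussPeriodP h3
  have hg₁ := gaussSum_pow_eq_sum_gaussPeriodP h3 one_ne_zero
  have hg₂ := gaussSum_pow_eq_sum_gaussPeriodP h3 two_ne_zero
  simp only [sum_range_succ, sum_range_zero, zero_add, pow_zero, one_mul, pow_one, ← pow_mul,
    zero_mul, Nat.reduceMul] at hsum hg₁ hg₂
  obtain ⟨h₁, h₂⟩ := gaussPeriods_eq_of_gaussSum_relations (u := ((2 * a - 3 * v : ℤ) : ℂ))
    zeta3_sq_add_zeta3_add_one hsum hg₁ hg₂
    (gaussSum_mul_gaussSum_sq_of_orderOf_eq_three hord zetaCAddChar_isPrimitive)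
    (hJ ▸ gaussSum_sq_of_orderOf_eq_three hord _)
    (jacobiSum_sq_eq_of_jacobiSum_eq hord hJ ▸ gaussSum_sq_sq_of_orderOf_eq_three hord _)
    (by push_cast; ring) hv
  rw [ZMod.card] at h₁ h₂
  refine ⟨2 * a - 3 * v, v, by linear_combination -4 * hnorm, by omega, by exact_mod_cast hv,
    h₁, h₂, ?_⟩
  rw [gaussSumP_eq_gaussSum, hg₁, h₁, h₂]

theorem stmt13 (p : ℕ) [NeZero p] (hp : p.Prime) (hp6 : p % 6 = 1)
    (χ : MulChar (ZMod p) ℂ) (hord : orderOf χ = 3) :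
    ∃ u v : ℤ, 4 * (p : ℤ) = u ^ 2 + 27 * v ^ 2 ∧ u % 3 = 1 ∧ v ≠ 0 ∧
      gaussPeriodP p (fun x => χ x) 1 =
        (gaussPeriodP p (fun x => χ x) 0) ^ 2 / (v : ℂ) +
          ((4 - (u : ℂ) - 3 * (v : ℂ)) / (6 * (v : ℂ))) * gaussPeriodP p (fun x => χ x) 0 +
          (2 - (u : ℂ) - 9 * (v : ℂ) - 4 * (p : ℂ)) / (18 * (v : ℂ)) ∧
      gaussPeriodP p (fun x => χ x) 2 =
        -((gaussPeriodP p (fun x => χ x) 0) ^ 2 / (v : ℂ)) -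
          ((3 * (v : ℂ) - (u : ℂ) + 4) / (6 * (v : ℂ))) * gaussPeriodP p (fun x => χ x) 0 -
          (9 * (v : ℂ) - (u : ℂ) - 4 * (p : ℂ) + 2) / (18 * (v : ℂ)) ∧
      gaussSumP p (fun y => χ y) =
        gaussPeriodP p (fun x => χ x) 0 +
          zeta3 * ((gaussPeriodP p (fun x => χ x) 0) ^ 2 / (v : ℂ) +
            ((4 - (u : ℂ) - 3 * (v : ℂ)) / (6 * (v : ℂ))) * gaussPeriodP p (fun x => χ x) 0 +
            (2 - (u : ℂ) - 9 * (v : ℂ) - 4 * (p : ℂ)) / (18 * (v : ℂ))) +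
          zeta3 ^ 2 * (-((gaussPeriodP p (fun x => χ x) 0) ^ 2 / (v : ℂ)) -
            ((3 * (v : ℂ) - (u : ℂ) + 4) / (6 * (v : ℂ))) * gaussPeriodP p (fun x => χ x) 0 -
            (9 * (v : ℂ) - (u : ℂ) - 4 * (p : ℂ) + 2) / (18 * (v : ℂ))) :=
  stmt13_general p hp χ hord
end

section
/- Let p ≡ 1 (mod 6) be a prime and let χ be a nontrivial cubic multiplicative character of F_{p²}. Let β ∈ F_p^* be an element that is a cube in F_p and a quadratic non-residue in F_p, and let α ∈ F_{p²} be a root of X² − β. Let χ' denote the restriction of χ to F_p, set A = Σ_{x ∈ F_p} χ'(x(x−1)) and A_1(1/(2α)) = Σ_{z ∈ F_p} χ(1/(2α) + z). Then A = − conjugate(A_1(1/(2α))). -/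
/-!
Let `ψ` be the restriction of `χ` to `𝔽_p` and `η` the quadratic character of `𝔽_p`. Every norm
`u ^ (p + 1)` lies in `𝔽_p` and `χ ^ (p + 1) = χ ^ 2 ≠ 1`, so `ψ` is nontrivial. On cube roots of
unity complex conjugation is the `(p + 1)`-st power, and `(2α)⁻¹ ^ p = -(2α)⁻¹` because `β` is a
non-residue, so `conj χ((2α)⁻¹ + z) = χ(((2α)⁻¹ + z) ^ (p + 1)) = ψ(z² - (4β)⁻¹)`. Completing the
square, `A = ∑ ψ(x² - 4⁻¹)`. Counting square roots with `1 + η` and substituting `u = c v` gives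
`∑ ψ(x² - c) = η(c) ψ(c) ∑ η(v) ψ(v - 1)`, and the two values `c = 4⁻¹`, `c = (4β)⁻¹` differ by the
factor `η(β) ψ(β) = -1`.
-/

open Finset

namespace MulChar

section Comap

variable {F L R : Type*} [Field F] [Field L] [CommMonoidWithZero R]

noncomputable def comap (f : F →+* L) (χ : MulChar L R) : MulChar F R where
  toFun x := χ (f x)
  map_one' := by simp
  map_mul' x y := by simp
  map_nonunit' a ha := by
    rw [isUnit_iff_ne_zero, not_not] at ha
    simp [ha]

@[simp]
lemma comap_apply (f : F →+* L) (χ : MulChar L R) (x : F) : χ.comap f x = χ (f x) := rfl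

end Comap

lemma apply_pow_orderOf {M R : Type*} [CommMonoid M] [CommMonoidWithZero R]
    (χ : MulChar M R) {a : M} (ha : IsUnit a) : χ (a ^ orderOf χ) = 1 := by
  obtain ⟨u, rfl⟩ := ha
  rw [map_pow, ← pow_apply_coe, pow_orderOf_eq_one, one_apply_coe]

lemma star_apply_eq_apply_pow {M : Type*} [CommRing M] [Finite Mˣ] (χ : MulChar M ℂ)
    {n : ℕ} (hn : n ≠ 0) (hχ : orderOf χ ∣ n + 1) (a : M) : star (χ a) = χ (a ^ n) := by
  have hinv : χ⁻¹ = χ ^ n :=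
    inv_eq_of_mul_eq_one_left <| by rw [← pow_succ, orderOf_dvd_iff_pow_eq_one.mp hχ]
  rw [star_apply', hinv, pow_apply' χ hn, map_pow]

end MulChar

section CharacterSums

variable {F R : Type*} [Field F] [Fintype F] [DecidableEq F] [CommRing R] [IsDomain R]
  {ψ : MulChar F R}

lemma sum_mulChar_sq_sub_eq_sum_quadraticChar (hF : ringChar F ≠ 2) (hψ : ψ ≠ 1) (c : F) :
    ∑ x, ψ (x ^ 2 - c) = ∑ u, (quadraticChar F u : R) * ψ (u - c) := by
  have hshift : ∑ u, ψ (u - c) = 0 :=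
    ((Equiv.subRight c).sum_comp ψ).trans (MulChar.sum_eq_zero_of_ne_one hψ)
  have hfibre (u : F) : (#{x | x ^ 2 = u} : R) = quadraticChar F u + 1 := by
    have := quadraticChar_card_sqrts hF u
    simpa only [Set.toFinset_ofPred, Int.cast_natCast, Int.cast_add, Int.cast_one] using
      congrArg (Int.cast : ℤ → R) this
  calc ∑ x, ψ (x ^ 2 - c)
      = ∑ u, #{x | x ^ 2 = u} • ψ (u - c) := by
        rw [← Finset.sum_fiberwise' univ (fun x : F ↦ x ^ 2) (fun u ↦ ψ (u - c))]
        simp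
    _ = ∑ u, ((quadraticChar F u : R) * ψ (u - c) + ψ (u - c)) := by
        simp only [nsmul_eq_mul, hfibre, add_mul, one_mul]
    _ = ∑ u, (quadraticChar F u : R) * ψ (u - c) := by
        rw [sum_add_distrib, hshift, add_zero]

lemma sum_mulChar_sq_sub (hF : ringChar F ≠ 2) (hψ : ψ ≠ 1) {c : F} (hc : c ≠ 0) :
    ∑ x, ψ (x ^ 2 - c) =
      quadraticChar F c * ψ c * ∑ v, (quadraticChar F v : R) * ψ (v - 1) := by
  rw [sum_mulChar_sq_sub_eq_sum_quadraticChar hF hψ, mul_sum,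
    ← Equiv.sum_comp (Equiv.mulLeft₀ c hc)]
  refine sum_congr rfl fun v _ ↦ ?_
  simp only [Equiv.mulLeft₀_apply, ← mul_sub_one, map_mul, Int.cast_mul]
  ring

lemma sum_mulChar_sq_sub_mul_of_not_isSquare (hF : ringChar F ≠ 2) (hψ : ψ ≠ 1) {c d : F}
    (hc : c ≠ 0) (hd : ¬IsSquare d) (hψd : ψ d = 1) :
    ∑ x, ψ (x ^ 2 - c * d) = -∑ x, ψ (x ^ 2 - c) := by
  have hd0 : d ≠ 0 := by
    rintro rfl
    exact hd IsSquare.zero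
  rw [sum_mulChar_sq_sub hF hψ (mul_ne_zero hc hd0), sum_mulChar_sq_sub hF hψ hc,
    map_mul, quadraticChar_neg_one_iff_not_isSquare.mpr hd, map_mul, hψd]
  push_cast
  ring

end CharacterSums

lemma sum_apply_mul_sub_one_eq_sum_apply_sq_sub {F M : Type*} [Field F] [Fintype F]
    [AddCommMonoid M] (h2 : (2 : F) ≠ 0) (f : F → M) :
    ∑ x, f (x * (x - 1)) = ∑ x, f (x ^ 2 - 4⁻¹) := by
  rw [← Equiv.sum_comp (Equiv.addRight (2⁻¹ : F))]
  refine sum_congr rfl fun x _ ↦ congrArg f ?_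
  rw [Equiv.coe_addRight, show (4 : F) = 2 * 2 by norm_num]
  field_simp
  ring

section PrimeSubfield

variable {p : ℕ} [Fact p.Prime] {K : Type*} [Field K] [Algebra (ZMod p) K]

lemma exists_algebraMap_eq_of_pow_eq_self {x : K} (hx : x ^ p = x) :
    ∃ y : ZMod p, algebraMap (ZMod p) K y = x := by
  have : CharP K p := charP_of_injective_algebraMap' (ZMod p) p
  have hx : x ∈ (ZMod.castHom dvd_rfl K).fieldRange := by
    rw [ZMod.fieldRange_castHom_eq_bot]
    exact (Subfield.mem_bot_iff_pow_eq_self K p).2 hx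
  rwa [RingHom.ext_zmod (ZMod.castHom dvd_rfl K) (algebraMap (ZMod p) K),
    RingHom.mem_fieldRange] at hx

lemma exists_algebraMap_eq_pow_succ [Fintype K] (hcard : Fintype.card K = p ^ 2) (u : K) :
    ∃ y : ZMod p, algebraMap (ZMod p) K y = u ^ (p + 1) := by
  refine exists_algebraMap_eq_of_pow_eq_self ?_
  rw [← pow_mul, show (p + 1) * p = p ^ 2 + p by ring, pow_add, ← hcard, FiniteField.pow_card,
    pow_succ']

lemma MulChar.comap_algebraMap_ne_one [Fintype K] {R : Type*} [CommMonoidWithZero R]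
    (hcard : Fintype.card K = p ^ 2) {χ : MulChar K R} (hχ : ¬orderOf χ ∣ p + 1) :
    χ.comap (algebraMap (ZMod p) K) ≠ 1 := by
  refine fun h ↦ hχ (orderOf_dvd_of_pow_eq_one (MulChar.ext fun u ↦ ?_))
  obtain ⟨y, hy⟩ := exists_algebraMap_eq_pow_succ hcard (u : K)
  have hy0 : y ≠ 0 := by
    rintro rfl
    exact pow_ne_zero _ u.ne_zero (by rw [← hy, map_zero])
  rw [pow_apply_coe, ← map_pow, ← hy, ← comap_apply, h, one_apply (isUnit_iff_ne_zero.mpr hy0),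
    one_apply_coe]

lemma pow_char_eq_neg_of_sq_eq_algebraMap (hp : p ≠ 2) {β : ZMod p} (hβ : ¬IsSquare β) {α : K}
    (hα : α ^ 2 = algebraMap (ZMod p) K β) : α ^ p = -α := by
  have hβ0 : β ≠ 0 := by
    rintro rfl
    exact hβ IsSquare.zero
  have hβp : β ^ (p / 2) = -1 := (ZMod.pow_div_two_eq_neg_one_or_one p hβ0).resolve_left
    (mt (ZMod.euler_criterion p hβ0).2 hβ)
  have hodd : p = 2 * (p / 2) + 1 := by
    have := Nat.odd_iff.mp ((Fact.out : p.Prime).odd_of_ne_two hp)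
    omega
  calc α ^ p = (α ^ 2) ^ (p / 2) * α := by rw [← pow_mul, ← pow_succ, ← hodd]
    _ = -α := by rw [hα, ← map_pow, hβp, map_neg, map_one, neg_one_mul]

lemma inv_two_mul_pow_char_of_pow_char_eq_neg {α : K} (hα : α ^ p = -α) :
    (2 * α)⁻¹ ^ p = -(2 * α)⁻¹ := by
  have h2 : (2 : K) ^ p = 2 := by
    simpa only [map_pow, map_ofNat] using congrArg (algebraMap (ZMod p) K) (ZMod.pow_card 2)
  rw [inv_pow, mul_pow, h2, hα, mul_neg, inv_neg]

lemma add_algebraMap_pow_succ_of_pow_char_eq_neg {γ : K} (hγ : γ ^ p = -γ) (z : ZMod p) :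
    (γ + algebraMap (ZMod p) K z) ^ (p + 1) = algebraMap (ZMod p) K (z ^ 2) - γ ^ 2 := by
  have : CharP K p := charP_of_injective_algebraMap' (ZMod p) p
  rw [pow_succ, add_pow_char, hγ, ← map_pow, ZMod.pow_card, map_pow]
  ring

end PrimeSubfield

theorem stmt18_general (p : ℕ) [NeZero p] (hp : p.Prime) (hp6 : p % 6 = 1)
    (K : Type) [Field K] [Fintype K] [Algebra (ZMod p) K]
    (hcard : Fintype.card K = p ^ 2)
    (χ : MulChar K ℂ) (hord : orderOf χ = 3)
    (β : ZMod p)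
    (hcube : ∃ c : ZMod p, c ^ 3 = β)
    (hnres : ¬ ∃ c : ZMod p, c ^ 2 = β)
    (α : K) (hα : α ^ 2 = algebraMap (ZMod p) K β) :
    ∑ x : ZMod p, χ (algebraMap (ZMod p) K (x * (x - 1))) =
      -(starRingEnd ℂ) (∑ z : ZMod p, χ ((2 * α)⁻¹ + algebraMap (ZMod p) K z)) := by
  have : Fact p.Prime := ⟨hp⟩
  have hp2 : p ≠ 2 := by omega
  have hF : ringChar (ZMod p) ≠ 2 := by rwa [ZMod.ringChar_zmod_n]
  have h2 : (2 : ZMod p) ≠ 0 := Ring.two_ne_zero hF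
  have h4 : (4 : ZMod p) ≠ 0 := by
    rw [show (4 : ZMod p) = 2 * 2 by norm_num]
    exact mul_ne_zero h2 h2
  have hβ : ¬IsSquare β := fun ⟨r, hr⟩ ↦ hnres ⟨r, by rw [sq, hr]⟩
  have hβ0 : β ≠ 0 := by
    rintro rfl
    exact hβ IsSquare.zero
  set ψ := χ.comap (algebraMap (ZMod p) K)
  have hψ : ψ ≠ 1 := MulChar.comap_algebraMap_ne_one hcard (by rw [hord]; omega)
  have hψβ : ψ β = 1 := by
    obtain ⟨c, rfl⟩ := hcube
    rw [MulChar.comap_apply, map_pow, ← hord]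
    exact χ.apply_pow_orderOf (by simpa using hβ0)
  have hconj (z : ZMod p) :
      starRingEnd ℂ (χ ((2 * α)⁻¹ + algebraMap (ZMod p) K z)) = ψ (z ^ 2 - (4 * β)⁻¹) := by
    have ha : (2 * α)⁻¹ ^ p = -(2 * α)⁻¹ :=
      inv_two_mul_pow_char_of_pow_char_eq_neg (pow_char_eq_neg_of_sq_eq_algebraMap hp2 hβ hα)
    rw [← Complex.star_def, χ.star_apply_eq_apply_pow p.succ_ne_zero (by rw [hord]; omega),
      add_algebraMap_pow_succ_of_pow_char_eq_neg ha, inv_pow, mul_pow, hα, MulChar.comap_apply]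
    congr 1
    rw [map_sub, map_inv₀, map_mul, map_ofNat]
    norm_num
  calc ∑ x : ZMod p, χ (algebraMap (ZMod p) K (x * (x - 1)))
      = ∑ x : ZMod p, ψ (x ^ 2 - (4 * β)⁻¹ * β) := by
        rw [mul_inv, inv_mul_cancel_right₀ hβ0]
        exact sum_apply_mul_sub_one_eq_sum_apply_sq_sub h2 ψ
    _ = -∑ z : ZMod p, ψ (z ^ 2 - (4 * β)⁻¹) :=
        sum_mulChar_sq_sub_mul_of_not_isSquare hF hψ (by simp [h4, hβ0]) hβ hψβ
    _ = _ := by simp_rw [map_sum, hconj]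

theorem stmt18 (p : ℕ) [NeZero p] (hp : p.Prime) (hp6 : p % 6 = 1)
    (K : Type) [Field K] [Fintype K] [Algebra (ZMod p) K]
    (hcard : Fintype.card K = p ^ 2)
    (χ : MulChar K ℂ) (hord : orderOf χ = 3)
    (β : ZMod p) (hβ0 : β ≠ 0)
    (hcube : ∃ c : ZMod p, c ^ 3 = β)
    (hnres : ¬ ∃ c : ZMod p, c ^ 2 = β)
    (α : K) (hα : α ^ 2 = algebraMap (ZMod p) K β) :
    ∑ x : ZMod p, χ (algebraMap (ZMod p) K (x * (x - 1))) =
      -(starRingEnd ℂ) (∑ z : ZMod p, χ ((2 * α)⁻¹ + algebraMap (ZMod p) K z)) :=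
  stmt18_general p hp hp6 K hcard χ hord β hcube hnres α hα
end
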